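/- Let (M,b) be a linear constraint system over ℤ_d (d arbitrary) and suppose that for generators g, h of the solution group 𝒢(M,b) and a, b', c ∈ ℤ_d the relation g^a h^{b'} = J^c h^{b'} g^a holds in 𝒢(M,b). Then the reflected relation h^{b'} g^a = J^c g^a h^{b'} also holds in 𝒢(M,b), and consequently J^{2c} = e in 𝒢(M,b). -/

import Mathlib

/-- ω = exp(2πi/d). -/
noncomputable def rootOfUnity (d : ℕ) : ℂ := Complex.exp (2 * Real.pi * Complex.I / d)

/-- A quantum solution to the linear constraint system `(M, b)` over `ℤ_d` on a complex
Hilbert space `H`: bounded operators `A i` with `A i ^ d = 1`, commuting whenever two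
variables appear in a common constraint, and with `∏ j, A j ^ M i j = ω ^ b i • 1` for
every row `i`. -/
def IsQuantumSolution (d : ℕ) {m n : ℕ} (M : Matrix (Fin m) (Fin n) (ZMod d))
    (b : Fin m → ZMod d) {H : Type} [NormedAddCommGroup H] [InnerProductSpace ℂ H]
    (A : Fin n → H →L[ℂ] H) : Prop :=
  (∀ i, A i ^ d = 1) ∧
  (∀ j k : Fin n, (∃ i, M i j ≠ 0 ∧ M i k ≠ 0) → Commute (A j) (A k)) ∧
  (∀ i : Fin m, (List.ofFn fun j => A j ^ (M i j).val).prod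
      = rootOfUnity d ^ (b i).val • (1 : H →L[ℂ] H))

/-- `(M,b)` admits a quantum solution on some nonzero complex Hilbert space. -/
def HasQuantumSolution (d : ℕ) {m n : ℕ} (M : Matrix (Fin m) (Fin n) (ZMod d))
    (b : Fin m → ZMod d) : Prop :=
  ∃ (H : Type) (_ : NormedAddCommGroup H) (_ : InnerProductSpace ℂ H)
    (_ : CompleteSpace H) (_ : Nontrivial H) (A : Fin n → H →L[ℂ] H),
    IsQuantumSolution d M b A

/-- The defining relations of the solution group of the LCS `(M,b)` over `ℤ_d`, on the
generators `none = J` and `some i = gᵢ`:  `J^d = gᵢ^d = e`, `J` is central,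
`g_j g_k = g_k g_j` whenever variables `j,k` share a constraint, and
`J^{-bᵢ} ∏_j g_j^{M i j} = e` for every row `i`. -/
def lcsRels (d : ℕ) {m n : ℕ} (M : Matrix (Fin m) (Fin n) (ZMod d)) (b : Fin m → ZMod d) :
    Set (FreeGroup (Option (Fin n))) :=
  {w | (∃ x : Option (Fin n), w = FreeGroup.of x ^ d) ∨
    (∃ i : Fin n, w = FreeGroup.of (none : Option (Fin n)) * FreeGroup.of (some i) *
        (FreeGroup.of (none : Option (Fin n)))⁻¹ * (FreeGroup.of (some i))⁻¹) ∨
    (∃ j k : Fin n, (∃ i, M i j ≠ 0 ∧ M i k ≠ 0) ∧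
        w = FreeGroup.of (some j) * FreeGroup.of (some k) *
          (FreeGroup.of (some j))⁻¹ * (FreeGroup.of (some k))⁻¹) ∨
    (∃ i : Fin m, w = (FreeGroup.of (none : Option (Fin n)) ^ (b i).val)⁻¹ *
        (List.ofFn fun j => FreeGroup.of (some j) ^ (M i j).val).prod)}

/-- The solution group `𝒢(M,b)`; `PresentedGroup.of none` is `J` and
`PresentedGroup.of (some i)` is the generator `gᵢ`. -/
abbrev SolutionGroup (d : ℕ) {m n : ℕ} (M : Matrix (Fin m) (Fin n) (ZMod d))
    (b : Fin m → ZMod d) := PresentedGroup (lcsRels d M b)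

/-! Every defining relation of `𝒢(M,b)` is a word in mutually commuting generators, so it also
holds read backwards: reversing words is an anti-automorphism of `𝒢(M,b)` fixing `J` and every
`gᵢ`. Applied to `g^a h^{b'} = J^c h^{b'} g^a`, with `J` central, it gives the reflected relation,
and substituting either relation into the other leaves `J^{2c} = e`. -/

open MulOpposite

theorem pow_val_natCast_mul {G : Type*} [Monoid G] {g : G} {d : ℕ} (hg : g ^ d = 1) (k : ℕ)
    (x : ZMod d) : g ^ ((k : ZMod d) * x).val = g ^ (k * x.val) := by
  rw [ZMod.val_mul, ZMod.val_natCast, Nat.mod_mul_mod, ← pow_eq_pow_mod _ hg]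

theorem op_list_prod_of_pairwise_commute {G : Type*} [Monoid G] {l : List G}
    (hl : l.Pairwise Commute) : op l.prod = (l.map op).prod := by
  rw [← l.reverse_perm.prod_eq' (List.pairwise_reverse.mpr (hl.imp Commute.symm)),
    op_list_prod, List.map_reverse, List.reverse_reverse]

theorem mul_comm_eq_of_antihom {G : Type*} [Monoid G] (φ : G →* Gᵐᵒᵖ) {x y z : G}
    (hx : φ x = op x) (hy : φ y = op y) (hz : φ z = op z) (hzxy : Commute z (x * y))
    (h : x * y = z * (y * x)) : y * x = z * (x * y) := by
  have h' := congrArg φ h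
  simp only [map_mul, hx, hy, hz, ← op_mul] at h'
  rw [op_injective h', hzxy.eq]

theorem mul_self_eq_one_of_mul_comm_eq {G : Type*} [CancelMonoid G] {x y z : G}
    (h : x * y = z * (y * x)) (h' : y * x = z * (x * y)) : z * z = 1 := by
  rw [h', ← mul_assoc] at h
  exact right_eq_mul.mp h

namespace SolutionGroup

variable {d m n : ℕ} {M : Matrix (Fin m) (Fin n) (ZMod d)} {b : Fin m → ZMod d}

theorem of_pow_eq_one (x : Option (Fin n)) :
    (PresentedGroup.of x : SolutionGroup d M b) ^ d = 1 := by
  have h := PresentedGroup.one_of_mem (rels := lcsRels d M b) (Or.inl ⟨x, rfl⟩)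
  rwa [map_pow] at h

theorem commute_of_none (i : Fin n) :
    Commute (PresentedGroup.of none : SolutionGroup d M b) (PresentedGroup.of (some i)) := by
  have h := PresentedGroup.one_of_mem (rels := lcsRels d M b) (Or.inr (Or.inl ⟨i, rfl⟩))
  simp only [map_mul, map_inv] at h
  exact commutatorElement_eq_one_iff_commute.mp h

theorem commute_of_some {j k : Fin n} (hjk : ∃ i, M i j ≠ 0 ∧ M i k ≠ 0) :
    Commute (PresentedGroup.of (some j) : SolutionGroup d M b) (PresentedGroup.of (some k)) := by
  have h := PresentedGroup.one_of_mem (rels := lcsRels d M b)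
    (Or.inr (Or.inr (Or.inl ⟨j, k, hjk, rfl⟩)))
  simp only [map_mul, map_inv] at h
  exact commutatorElement_eq_one_iff_commute.mp h

theorem row_prod (i : Fin m) :
    (List.ofFn fun j => (PresentedGroup.of (some j) : SolutionGroup d M b) ^ (M i j).val).prod
      = PresentedGroup.of none ^ (b i).val := by
  have h := PresentedGroup.one_of_mem (rels := lcsRels d M b)
    (Or.inr (Or.inr (Or.inr ⟨i, rfl⟩)))
  rw [map_mul, map_inv, map_pow, map_list_prod, List.map_ofFn, inv_mul_eq_one] at h
  simp only [Function.comp_def, map_pow] at h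
  exact h.symm

theorem pairwise_commute_row (i : Fin m) :
    (List.ofFn fun j =>
      (PresentedGroup.of (some j) : SolutionGroup d M b) ^ (M i j).val).Pairwise Commute := by
  refine List.pairwise_ofFn.mpr fun j k _ => ?_
  by_cases hj : M i j = 0
  · simp [hj]
  by_cases hk : M i k = 0
  · simp [hk]
  exact (commute_of_some ⟨i, hj, hk⟩).pow_pow _ _

theorem lift_op_of_relator : ∀ r ∈ lcsRels d M b,
    FreeGroup.lift (fun x => op (PresentedGroup.of x : SolutionGroup d M b)) r = 1 := by
  rintro r (⟨x, rfl⟩ | ⟨i, rfl⟩ | ⟨j, k, hjk, rfl⟩ | ⟨i, rfl⟩)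
  · rw [map_pow, FreeGroup.lift_apply_of, ← op_pow, of_pow_eq_one, op_one]
  · simp only [map_mul, map_inv, FreeGroup.lift_apply_of]
    exact commutatorElement_eq_one_iff_commute.mpr (commute_of_none i).op
  · simp only [map_mul, map_inv, FreeGroup.lift_apply_of]
    exact commutatorElement_eq_one_iff_commute.mpr (commute_of_some hjk).op
  · simp only [map_mul, map_inv, map_pow, map_list_prod, List.map_ofFn, Function.comp_def,
      FreeGroup.lift_apply_of, ← op_pow]
    have hrow : (List.ofFn fun j =>
          op (PresentedGroup.of (some j) ^ (M i j).val : SolutionGroup d M b))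
        = (List.ofFn fun j => PresentedGroup.of (some j) ^ (M i j).val).map op :=
      List.map_ofFn.symm
    rw [hrow, ← op_list_prod_of_pairwise_commute (pairwise_commute_row i), row_prod,
      inv_mul_cancel]

def reverse : SolutionGroup d M b →* (SolutionGroup d M b)ᵐᵒᵖ :=
  PresentedGroup.toGroup lift_op_of_relator

theorem reverse_of_pow (x : Option (Fin n)) (k : ℕ) :
    reverse (PresentedGroup.of x ^ k : SolutionGroup d M b) = op (PresentedGroup.of x ^ k) := by
  rw [map_pow, reverse, PresentedGroup.toGroup.of, op_pow]

end SolutionGroup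

theorem reflected_phase_commutation_general (d : ℕ) {m n : ℕ}
    (M : Matrix (Fin m) (Fin n) (ZMod d)) (b : Fin m → ZMod d)
    (i₁ i₂ : Fin n) (a b' c : ZMod d)
    (hrel : (PresentedGroup.of (some i₁) : SolutionGroup d M b) ^ a.val *
          PresentedGroup.of (some i₂) ^ b'.val
        = PresentedGroup.of (none : Option (Fin n)) ^ c.val *
          (PresentedGroup.of (some i₂) ^ b'.val *
            PresentedGroup.of (some i₁) ^ a.val)) :
    ((PresentedGroup.of (some i₂) : SolutionGroup d M b) ^ b'.val *
          PresentedGroup.of (some i₁) ^ a.val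
        = PresentedGroup.of (none : Option (Fin n)) ^ c.val *
          (PresentedGroup.of (some i₁) ^ a.val *
            PresentedGroup.of (some i₂) ^ b'.val)) ∧
      (PresentedGroup.of (none : Option (Fin n)) : SolutionGroup d M b) ^ (2 * c).val = 1 := by
  have hcomm : Commute (PresentedGroup.of none ^ c.val : SolutionGroup d M b)
      (PresentedGroup.of (some i₁) ^ a.val * PresentedGroup.of (some i₂) ^ b'.val) :=
    ((SolutionGroup.commute_of_none i₁).pow_pow _ _).mul_right
      ((SolutionGroup.commute_of_none i₂).pow_pow _ _)
  have hreflected := mul_comm_eq_of_antihom SolutionGroup.reverse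
    (SolutionGroup.reverse_of_pow _ _) (SolutionGroup.reverse_of_pow _ _)
    (SolutionGroup.reverse_of_pow _ _) hcomm hrel
  refine ⟨hreflected, ?_⟩
  rw [← Nat.cast_ofNat, pow_val_natCast_mul (SolutionGroup.of_pow_eq_one none), two_mul, pow_add]
  exact mul_self_eq_one_of_mul_comm_eq hrel hreflected

/-- for any `d`, a phase-commutation relation `g^a h^{b'} = J^c h^{b'} g^a`
in the solution group of an LCS `(M,b)` over `ℤ_d` implies the reflected relation
`h^{b'} g^a = J^c g^a h^{b'}`, and consequently `J^{2c} = e` in `𝒢(M,b)`. -/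
theorem reflected_phase_commutation (d : ℕ) (hd : 0 < d) {m n : ℕ}
    (M : Matrix (Fin m) (Fin n) (ZMod d)) (b : Fin m → ZMod d)
    (i₁ i₂ : Fin n) (a b' c : ZMod d)
    (hrel : (PresentedGroup.of (some i₁) : SolutionGroup d M b) ^ a.val *
          PresentedGroup.of (some i₂) ^ b'.val
        = PresentedGroup.of (none : Option (Fin n)) ^ c.val *
          (PresentedGroup.of (some i₂) ^ b'.val *
            PresentedGroup.of (some i₁) ^ a.val)) :
    ((PresentedGroup.of (some i₂) : SolutionGroup d M b) ^ b'.val *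
          PresentedGroup.of (some i₁) ^ a.val
        = PresentedGroup.of (none : Option (Fin n)) ^ c.val *
          (PresentedGroup.of (some i₁) ^ a.val *
            PresentedGroup.of (some i₂) ^ b'.val)) ∧
      (PresentedGroup.of (none : Option (Fin n)) : SolutionGroup d M b) ^ (2 * c).val = 1 :=
  reflected_phase_commutation_general d M b i₁ i₂ a b' c hrel
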